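/- Let g be a symmetric bilinear form on ℝ⁴ of Lorentzian signature (+,−,−,−), with matrix (g_{ab}) and inverse (g^{ab}), and let A be a linear form with g⁻¹(A,A) = Σ g^{ab}A_aA_b > 0. Fix q with −1 < q < 1 and q ≠ 0, and define L(y) = g(y,y)^{1−q}A(y)^{2q} on {y : g(y,y) > 0 and A(y) > 0}, with L-metric g^L_{ab}(y) = (1/2)∂²L/∂y^a∂y^b(y). Then det(g^L(y)) < 0 for every such y. -/

import Mathlib

noncomputable section

/-- The quadratic form `g(y,y) = Σ g_{ab} y^a y^b` of a 4×4 matrix. -/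
def quadForm (g : Matrix (Fin 4) (Fin 4) ℝ) (y : Fin 4 → ℝ) : ℝ :=
  ∑ a, ∑ b, g a b * y a * y b

/-- The linear form `A(y) = Σ A_a y^a`. -/
def linForm (A : Fin 4 → ℝ) (y : Fin 4 → ℝ) : ℝ := ∑ a, A a * y a

/-- `g⁻¹(A,A) = Σ g^{ab} A_a A_b`. -/
def coQuadForm (g : Matrix (Fin 4) (Fin 4) ℝ) (A : Fin 4 → ℝ) : ℝ :=
  ∑ a, ∑ b, g⁻¹ a b * A a * A b

/-- The L-metric: the matrix `g^L_{ab}(y) = (1/2) ∂²L/∂y^a∂y^b (y)`. -/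
def Lmetric (L : (Fin 4 → ℝ) → ℝ) (y : Fin 4 → ℝ) : Matrix (Fin 4) (Fin 4) ℝ :=
  Matrix.of fun a b =>
    (1 / 2) * fderiv ℝ (fun z => fderiv ℝ L z (Pi.single b 1)) y (Pi.single a 1)

/-- A symmetric bilinear form on `ℝ⁴` has Lorentzian signature `(+,−,−,−)` if its
quadratic form is linearly equivalent to `u₀² − u₁² − u₂² − u₃²`. -/
def IsLorentzian (g : Matrix (Fin 4) (Fin 4) ℝ) : Prop :=
  ∃ e : (Fin 4 → ℝ) ≃ₗ[ℝ] (Fin 4 → ℝ), ∀ y : Fin 4 → ℝ,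
    quadForm g y = (e y 0) ^ 2 - (e y 1) ^ 2 - (e y 2) ^ 2 - (e y 3) ^ 2

/-! On the cone `g(y,y) > 0, A(y) > 0` the L-metric is a positive multiple of a rank-two
perturbation of `g`: with `Q = g(y,y)` and `G = A(y)`,
`g^L = (1-q) Q^{-q} G^{2q} (g + Pᵀ C P)`, where `P` has rows `g y` and `A`.
Writing `A = g w`, the matrix determinant lemma gives `det (g + Pᵀ C P) = det g · det (1 + C Γ)`
with `Γ` the Gram matrix of `y, w`, and `det (1 + C Γ) = ((1+q) G² - q Q g⁻¹(A,A)) / ((1-q) G²)`.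
The numerator is positive: for `q ≤ 0` because `g⁻¹(A,A) > 0`, for `q > 0` by the reversed
Cauchy–Schwarz inequality `g(y,y) g(w,w) ≤ g(y,w)²` for timelike `y`. Finally `det g < 0`,
since `g = Eᵀ diag(1,-1,-1,-1) E`. -/

lemma HasFDerivAt.rpow_const_mul_rpow_const {E : Type*} [NormedAddCommGroup E] [NormedSpace ℝ E]
    {f h : E → ℝ} {f' h' : E →L[ℝ] ℝ} {z : E} (hf : HasFDerivAt f f' z) (hh : HasFDerivAt h h' z)
    (hfz : f z ≠ 0) (hhz : h z ≠ 0) (r s : ℝ) :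
    HasFDerivAt (fun z => f z ^ r * h z ^ s)
      ((r * f z ^ (r - 1) * h z ^ s) • f' + (s * f z ^ r * h z ^ (s - 1)) • h') z := by
  refine ((hf.rpow_const (p := r) (Or.inl hfz)).fun_mul
    (hh.rpow_const (p := s) (Or.inl hhz))).congr_fderiv ?_
  ext v
  simp only [add_apply, smul_apply, smul_eq_mul]
  ring

open Matrix Topology

section Symmetric

variable {n R : Type*} [Fintype n] [CommRing R] {g : Matrix n n R}

lemma Matrix.IsSymm.dotProduct_mulVec_comm (hg : g.IsSymm) (u v : n → R) :
    u ⬝ᵥ g *ᵥ v = v ⬝ᵥ g *ᵥ u := by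
  rw [dotProduct_mulVec, ← mulVec_transpose, hg.eq, dotProduct_comm]

lemma Matrix.IsSymm.add_dotProduct_mulVec_add (hg : g.IsSymm) (u v : n → R) :
    (u + v) ⬝ᵥ g *ᵥ (u + v) = u ⬝ᵥ g *ᵥ u + 2 * (u ⬝ᵥ g *ᵥ v) + v ⬝ᵥ g *ᵥ v := by
  rw [mulVec_add, dotProduct_add, add_dotProduct, add_dotProduct, hg.dotProduct_mulVec_comm v u]
  ring

lemma Matrix.IsSymm.ext_of_dotProduct_mulVec_self [DecidableEq n] [IsDomain R] [NeZero (2 : R)]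
    {h : Matrix n n R} (hg : g.IsSymm) (hh : h.IsSymm)
    (hgh : ∀ y, y ⬝ᵥ g *ᵥ y = y ⬝ᵥ h *ᵥ y) : g = h := by
  have polar : ∀ u v : n → R, u ⬝ᵥ g *ᵥ v = u ⬝ᵥ h *ᵥ v := fun u v => by
    have := hgh (u + v)
    rw [hg.add_dotProduct_mulVec_add, hh.add_dotProduct_mulVec_add, hgh u, hgh v] at this
    exact mul_left_cancel₀ two_ne_zero (by linear_combination this)
  ext a b
  simpa [mulVec_single_one, single_one_dotProduct] using polar (Pi.single a 1) (Pi.single b 1)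

end Symmetric

lemma quadForm_eq_dotProduct (g : Matrix (Fin 4) (Fin 4) ℝ) (y : Fin 4 → ℝ) :
    quadForm g y = y ⬝ᵥ g *ᵥ y := by
  simp only [quadForm, dotProduct, mulVec, Finset.mul_sum]
  exact Finset.sum_congr rfl fun a _ => Finset.sum_congr rfl fun b _ => by ring

lemma linForm_eq_dotProduct (A y : Fin 4 → ℝ) : linForm A y = A ⬝ᵥ y := rfl

lemma coQuadForm_eq_dotProduct (g : Matrix (Fin 4) (Fin 4) ℝ) (A : Fin 4 → ℝ) :
    coQuadForm g A = A ⬝ᵥ g⁻¹ *ᵥ A := by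
  simp only [coQuadForm, dotProduct, mulVec, Finset.mul_sum]
  exact Finset.sum_congr rfl fun a _ => Finset.sum_congr rfl fun b _ => by ring

namespace IsLorentzian

variable {g : Matrix (Fin 4) (Fin 4) ℝ}

lemma eq_transpose_mul_diagonal_mul (hgs : g.IsSymm) (hg : IsLorentzian g) :
    ∃ E : Matrix (Fin 4) (Fin 4) ℝ, IsUnit E.det ∧ g = Eᵀ * diagonal ![1, -1, -1, -1] * E := by
  obtain ⟨e, he⟩ := hg
  set E := LinearMap.toMatrix' (e : (Fin 4 → ℝ) →ₗ[ℝ] (Fin 4 → ℝ))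
  refine ⟨E, by simpa [E, LinearMap.det_toMatrix'] using e.isUnit_det', ?_⟩
  refine hgs.ext_of_dotProduct_mulVec_self ?_ fun y => ?_
  · simp [IsSymm, Matrix.transpose_mul, Matrix.mul_assoc]
  · rw [← quadForm_eq_dotProduct, he, ← mulVec_mulVec, ← mulVec_mulVec, dotProduct_mulVec y,
      vecMul_transpose]
    simp [E, LinearMap.toMatrix'_mulVec, mulVec_diagonal, dotProduct, Fin.sum_univ_four]
    ring

lemma det_neg (hgs : g.IsSymm) (hg : IsLorentzian g) : g.det < 0 := by
  obtain ⟨E, hE, rfl⟩ := hg.eq_transpose_mul_diagonal_mul hgs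
  have : 0 < E.det ^ 2 := by positivity [hE.ne_zero]
  simp [det_diagonal, Fin.prod_univ_four]
  nlinarith

lemma mul_le_sq (hgs : g.IsSymm) (hg : IsLorentzian g) {y : Fin 4 → ℝ}
    (hy : 0 < y ⬝ᵥ g *ᵥ y) (w : Fin 4 → ℝ) :
    (y ⬝ᵥ g *ᵥ y) * (w ⬝ᵥ g *ᵥ w) ≤ (w ⬝ᵥ g *ᵥ y) ^ 2 := by
  obtain ⟨e, he⟩ := hg
  simp only [quadForm_eq_dotProduct] at he
  have hy0 : e y 0 ≠ 0 := fun h => by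
    nlinarith [he y, sq_nonneg (e y 1), sq_nonneg (e y 2), sq_nonneg (e y 3)]
  -- `w + t • y` has vanishing time component, so it is not timelike
  set t := -e w 0 / e y 0
  have hspacelike : (w + t • y) ⬝ᵥ g *ᵥ (w + t • y) ≤ 0 := by
    have : e (w + t • y) 0 = 0 := by simp [t, field]
    rw [he, this]
    nlinarith [sq_nonneg (e (w + t • y) 1), sq_nonneg (e (w + t • y) 2),
      sq_nonneg (e (w + t • y) 3)]
  rw [hgs.add_dotProduct_mulVec_add, mulVec_smul, dotProduct_smul, smul_dotProduct,
    dotProduct_smul, smul_eq_mul, smul_eq_mul, smul_eq_mul] at hspacelike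
  nlinarith [sq_nonneg (t * (y ⬝ᵥ g *ᵥ y) + w ⬝ᵥ g *ᵥ y)]

end IsLorentzian

section Derivatives

variable {n : Type*} [Fintype n]

lemma fderiv_dotProduct_apply (w z v : n → ℝ) :
    fderiv ℝ (fun z => w ⬝ᵥ z) z v = w ⬝ᵥ v := by
  rw [show (fun z => w ⬝ᵥ z) = LinearMap.toContinuousLinearMap (dotProductBilin ℝ ℝ w) from rfl,
    ContinuousLinearMap.fderiv]
  rfl

lemma fderiv_dotProduct_mulVec_self_apply {g : Matrix n n ℝ} (hg : g.IsSymm) (z v : n → ℝ) :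
    fderiv ℝ (fun z => z ⬝ᵥ g *ᵥ z) z v = 2 * (v ⬝ᵥ g *ᵥ z) := by
  let B : (n → ℝ) →L[ℝ] (n → ℝ) →L[ℝ] ℝ := LinearMap.toContinuousLinearMap
    (LinearMap.toContinuousLinearMap.toLinearMap ∘ₗ dotProductBilin ℝ ℝ)
  let M : (n → ℝ) →L[ℝ] (n → ℝ) := LinearMap.toContinuousLinearMap g.mulVecLin
  have hQ : HasFDerivAt (fun z => z ⬝ᵥ g *ᵥ z) _ z :=
    B.hasFDerivAt_of_bilinear (hasFDerivAt_id z) M.hasFDerivAt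
  rw [hQ.fderiv]
  change z ⬝ᵥ g *ᵥ v + v ⬝ᵥ g *ᵥ z = _
  rw [hg.dotProduct_mulVec_comm z]
  ring

lemma differentiable_dotProduct (w : n → ℝ) : Differentiable ℝ fun z => w ⬝ᵥ z := by
  unfold dotProduct
  fun_prop

lemma differentiable_dotProduct_mulVec_self (g : Matrix n n ℝ) :
    Differentiable ℝ fun z => z ⬝ᵥ g *ᵥ z := by
  unfold dotProduct mulVec dotProduct
  fun_prop

end Derivatives

section Lagrangian

variable {n : Type*} [Fintype n] {g : Matrix n n ℝ} {A : n → ℝ} {q : ℝ}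

variable (g A q) in
def bogoslovskyLagrangian (z : n → ℝ) : ℝ := (z ⬝ᵥ g *ᵥ z) ^ (1 - q) * (A ⬝ᵥ z) ^ (2 * q)

variable (q) in
def bogoslovskyCoeff (Q G : ℝ) : Matrix (Fin 2) (Fin 2) ℝ :=
  !![-2 * q / Q, 2 * q / G; 2 * q / G, q * (2 * q - 1) * Q / ((1 - q) * G ^ 2)]

lemma fderiv_bogoslovskyLagrangian_apply (hg : g.IsSymm) {z : n → ℝ} (hQ : z ⬝ᵥ g *ᵥ z ≠ 0)
    (hG : A ⬝ᵥ z ≠ 0) (v : n → ℝ) :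
    fderiv ℝ (bogoslovskyLagrangian g A q) z v =
      2 * ((1 - q) * ((z ⬝ᵥ g *ᵥ z) ^ (-q) * (A ⬝ᵥ z) ^ (2 * q)) * (g *ᵥ v ⬝ᵥ z)
        + q * (A ⬝ᵥ v) * ((z ⬝ᵥ g *ᵥ z) ^ (1 - q) * (A ⬝ᵥ z) ^ (2 * q - 1))) := by
  have hL : HasFDerivAt (bogoslovskyLagrangian g A q) _ z :=
    (differentiable_dotProduct_mulVec_self g z).hasFDerivAt.rpow_const_mul_rpow_const
      (differentiable_dotProduct A z).hasFDerivAt hQ hG (1 - q) (2 * q)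
  rw [hL.fderiv]
  simp only [_root_.add_apply, _root_.smul_apply, smul_eq_mul,
    fderiv_dotProduct_mulVec_self_apply hg, fderiv_dotProduct_apply, sub_sub_cancel_left,
    hg.dotProduct_mulVec_comm v, dotProduct_comm z]
  ring

lemma dotProduct_transpose_mul_mul_mulVec {m R : Type*} [Fintype m] [CommRing R]
    (P : Matrix m n R) (C : Matrix m m R) (u v : n → R) :
    u ⬝ᵥ (Pᵀ * C * P) *ᵥ v = (P *ᵥ u) ⬝ᵥ C *ᵥ (P *ᵥ v) := by
  rw [← mulVec_mulVec, ← mulVec_mulVec, dotProduct_mulVec u, vecMul_transpose]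

lemma fderiv_fderiv_apply_of_eq_bogoslovskyLagrangian (hg : g.IsSymm) (hq : q ≠ 1) {L : (n → ℝ) → ℝ}
    (hL : ∀ z, 0 < z ⬝ᵥ g *ᵥ z → 0 < A ⬝ᵥ z → L z = bogoslovskyLagrangian g A q z)
    {y : n → ℝ} (hQ : 0 < y ⬝ᵥ g *ᵥ y) (hG : 0 < A ⬝ᵥ y) (u v : n → ℝ) :
    fderiv ℝ (fun z => fderiv ℝ L z v) y u =
      2 * ((1 - q) * (y ⬝ᵥ g *ᵥ y) ^ (-q) * (A ⬝ᵥ y) ^ (2 * q)) *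
        (u ⬝ᵥ (g + (of ![g *ᵥ y, A])ᵀ * bogoslovskyCoeff q (y ⬝ᵥ g *ᵥ y) (A ⬝ᵥ y) *
          of ![g *ᵥ y, A]) *ᵥ v) := by
  have hcone : IsOpen {z | 0 < z ⬝ᵥ g *ᵥ z ∧ 0 < A ⬝ᵥ z} :=
    (isOpen_lt continuous_const (differentiable_dotProduct_mulVec_self g).continuous).inter
      (isOpen_lt continuous_const (differentiable_dotProduct A).continuous)
  have hL' : (fun z => fderiv ℝ L z v) =ᶠ[𝓝 y] fun z =>
      2 * ((1 - q) * ((z ⬝ᵥ g *ᵥ z) ^ (-q) * (A ⬝ᵥ z) ^ (2 * q)) * (g *ᵥ v ⬝ᵥ z)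
        + q * (A ⬝ᵥ v) * ((z ⬝ᵥ g *ᵥ z) ^ (1 - q) * (A ⬝ᵥ z) ^ (2 * q - 1))) := by
    filter_upwards [hcone.mem_nhds ⟨hQ, hG⟩] with z hz
    have hLz : L =ᶠ[𝓝 z] bogoslovskyLagrangian g A q :=
      Filter.eventually_of_mem (hcone.mem_nhds hz) fun x hx => hL x hx.1 hx.2
    rw [hLz.fderiv_eq, fderiv_bogoslovskyLagrangian_apply hg hz.1.ne' hz.2.ne']
  have hQd := (differentiable_dotProduct_mulVec_self g y).hasFDerivAt
  have hGd := (differentiable_dotProduct A y).hasFDerivAt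
  have hψ := (((hQd.rpow_const_mul_rpow_const hGd hQ.ne' hG.ne' (-q) (2 * q)).const_mul
    (1 - q)).fun_mul (differentiable_dotProduct (g *ᵥ v) y).hasFDerivAt).fun_add
    ((hQd.rpow_const_mul_rpow_const hGd hQ.ne' hG.ne' (1 - q) (2 * q - 1)).const_mul
      (q * (A ⬝ᵥ v))) |>.const_mul 2
  rw [hL'.fderiv_eq, hψ.fderiv]
  simp only [_root_.add_apply, _root_.smul_apply, smul_eq_mul,
    fderiv_dotProduct_mulVec_self_apply hg, fderiv_dotProduct_apply]
  have hQ1 : (y ⬝ᵥ g *ᵥ y) ^ (1 - q) = (y ⬝ᵥ g *ᵥ y) ^ (-q) * (y ⬝ᵥ g *ᵥ y) := by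
    rw [← Real.rpow_add_one hQ.ne']; ring_nf
  rw [add_mulVec, dotProduct_add, dotProduct_transpose_mul_mul_mulVec, sub_sub_cancel_left, hQ1,
    dotProduct_comm (g *ᵥ v) y, hg.dotProduct_mulVec_comm y v, dotProduct_comm v,
    dotProduct_comm u (g *ᵥ y), dotProduct_comm (g *ᵥ v) u]
  simp only [Real.rpow_sub_one hQ.ne', Real.rpow_sub_one hG.ne']
  have hP : ∀ x, of ![g *ᵥ y, A] *ᵥ x = ![g *ᵥ y ⬝ᵥ x, A ⬝ᵥ x] := fun x => by
    ext i; fin_cases i <;> rfl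
  simp only [hP, bogoslovskyCoeff, cons_mulVec, empty_mulVec, vec2_dotProduct']
  have : 1 - q ≠ 0 := sub_ne_zero.2 hq.symm
  field_simp
  ring

end Lagrangian

lemma Matrix.IsSymm.det_add_transpose_mul_mul {n m R : Type*} [Fintype n] [DecidableEq n]
    [Fintype m] [DecidableEq m] [CommRing R] {g : Matrix n n R} (hg : g.IsSymm)
    (Y : Matrix m n R) (C : Matrix m m R) :
    (g + (Y * g)ᵀ * C * (Y * g)).det = g.det * (1 + C * (Y * g * Yᵀ)).det := by
  have : g + (Y * g)ᵀ * C * (Y * g) = g * (1 + Yᵀ * (C * Y * g)) := by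
    rw [transpose_mul, hg.eq, Matrix.mul_add, Matrix.mul_one]
    simp only [Matrix.mul_assoc]
  rw [this, det_mul, det_one_add_mul_comm]
  simp only [Matrix.mul_assoc]

lemma det_one_add_bogoslovskyCoeff_mul {q Q G b : ℝ} (hq : q ≠ 1) (hQ : Q ≠ 0) (hG : G ≠ 0) :
    (1 + bogoslovskyCoeff q Q G * !![Q, G; G, b]).det =
      ((1 + q) * G ^ 2 - q * Q * b) / ((1 - q) * G ^ 2) := by
  have : 1 - q ≠ 0 := sub_ne_zero.2 hq.symm
  rw [det_fin_two]
  simp [bogoslovskyCoeff]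
  field_simp
  ring

section Lmetric

variable {g : Matrix (Fin 4) (Fin 4) ℝ} {A : Fin 4 → ℝ} {q : ℝ} {L : (Fin 4 → ℝ) → ℝ}

lemma Lmetric_eq_smul (hg : g.IsSymm) (hq : q ≠ 1)
    (hL : ∀ z, 0 < z ⬝ᵥ g *ᵥ z → 0 < A ⬝ᵥ z → L z = bogoslovskyLagrangian g A q z)
    {y : Fin 4 → ℝ} (hQ : 0 < y ⬝ᵥ g *ᵥ y) (hG : 0 < A ⬝ᵥ y) :
    Lmetric L y = ((1 - q) * (y ⬝ᵥ g *ᵥ y) ^ (-q) * (A ⬝ᵥ y) ^ (2 * q)) •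
      (g + (of ![g *ᵥ y, A])ᵀ * bogoslovskyCoeff q (y ⬝ᵥ g *ᵥ y) (A ⬝ᵥ y) * of ![g *ᵥ y, A]) := by
  ext a b
  rw [Lmetric, of_apply, fderiv_fderiv_apply_of_eq_bogoslovskyLagrangian hg hq hL hQ hG,
    mulVec_single_one, single_one_dotProduct, col_apply, Matrix.smul_apply, smul_eq_mul]
  ring

lemma det_Lmetric (hg : g.IsSymm) (hq : q ≠ 1)
    (hL : ∀ z, 0 < z ⬝ᵥ g *ᵥ z → 0 < A ⬝ᵥ z → L z = bogoslovskyLagrangian g A q z)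
    {y : Fin 4 → ℝ} (hQ : 0 < y ⬝ᵥ g *ᵥ y) (hG : 0 < A ⬝ᵥ y) {w : Fin 4 → ℝ} (hw : g *ᵥ w = A) :
    (Lmetric L y).det = ((1 - q) * (y ⬝ᵥ g *ᵥ y) ^ (-q) * (A ⬝ᵥ y) ^ (2 * q)) ^ 4 * g.det *
      (((1 + q) * (A ⬝ᵥ y) ^ 2 - q * (y ⬝ᵥ g *ᵥ y) * (A ⬝ᵥ w)) / ((1 - q) * (A ⬝ᵥ y) ^ 2)) := by
  have hY : of ![g *ᵥ y, A] = of ![y, w] * g := by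
    rw [← hw]; ext i j; fin_cases i <;> simp [cons_mul, ← vecMul_transpose, hg.eq]
  have hgram : of ![y, w] * g * (of ![y, w])ᵀ = !![y ⬝ᵥ g *ᵥ y, A ⬝ᵥ y; A ⬝ᵥ y, A ⬝ᵥ w] := by
    have hyw : g *ᵥ y ⬝ᵥ w = A ⬝ᵥ y := by
      rw [dotProduct_comm, hg.dotProduct_mulVec_comm, hw, dotProduct_comm]
    rw [← hY]
    ext i j
    change ![g *ᵥ y, A] i ⬝ᵥ ![y, w] j = _
    fin_cases i <;> fin_cases j <;> simp [dotProduct_comm (g *ᵥ y) y, hyw]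
  rw [Lmetric_eq_smul hg hq hL hQ hG, det_smul, hY, hg.det_add_transpose_mul_mul, hgram,
    det_one_add_bogoslovskyCoeff_mul hq hQ.ne' hG.ne', Fintype.card_fin]
  ring

end Lmetric

theorem bogoslovsky_q_between_det_neg_general (g : Matrix (Fin 4) (Fin 4) ℝ) (hgs : g.IsSymm)
    (hglor : IsLorentzian g) (A : Fin 4 → ℝ) (hA : 0 < coQuadForm g A)
    (q : ℝ) (hq₁ : -1 < q) (hq₂ : q < 1) (L : (Fin 4 → ℝ) → ℝ)
    (hLdef : ∀ y : Fin 4 → ℝ, 0 < quadForm g y → 0 < linForm A y →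
      L y = (quadForm g y) ^ (1 - q) * (linForm A y) ^ (2 * q)) :
    ∀ y : Fin 4 → ℝ, 0 < quadForm g y → 0 < linForm A y →
      (Lmetric L y).det < 0 := by
  simp only [quadForm_eq_dotProduct, linForm_eq_dotProduct] at hLdef ⊢
  intro y hQ hG
  rw [coQuadForm_eq_dotProduct] at hA
  have hdet := hglor.det_neg hgs
  set w := g⁻¹ *ᵥ A
  have hw : g *ᵥ w = A := by
    rw [mulVec_mulVec, mul_nonsing_inv _ (isUnit_iff_ne_zero.2 hdet.ne), one_mulVec]
  have hCS : (y ⬝ᵥ g *ᵥ y) * (A ⬝ᵥ w) ≤ (A ⬝ᵥ y) ^ 2 := by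
    have := hglor.mul_le_sq hgs hQ w
    rwa [hgs.dotProduct_mulVec_comm w y, hw, dotProduct_comm w, dotProduct_comm y A] at this
  have hnum : 0 < (1 + q) * (A ⬝ᵥ y) ^ 2 - q * (y ⬝ᵥ g *ᵥ y) * (A ⬝ᵥ w) := by
    rcases le_or_gt q 0 with hq | hq
    · nlinarith [mul_pos hQ hA, mul_pos (by linarith : 0 < 1 + q) (pow_pos hG 2)]
    · nlinarith [mul_le_mul_of_nonneg_left hCS hq.le, pow_pos hG 2]
  have h1q := sub_pos.2 hq₂
  have hα : 0 < (1 - q) * (y ⬝ᵥ g *ᵥ y) ^ (-q) * (A ⬝ᵥ y) ^ (2 * q) := by positivity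
  rw [det_Lmetric hgs hq₂.ne hLdef hQ hG hw]
  exact mul_neg_of_neg_of_pos (mul_neg_of_pos_of_neg (pow_pos hα 4) hdet)
    (div_pos hnum (by positivity))

/-- For a Lorentzian metric `g`, a `g`-timelike 1-form `A` (`g⁻¹(A,A) > 0`) and
`−1 < q < 1`, `q ≠ 0`, the L-metric of `L = g(y,y)^{1−q} A(y)^{2q}` has negative
determinant whenever `g(y,y) > 0` and `A(y) > 0`. -/
theorem bogoslovsky_q_between_det_neg (g : Matrix (Fin 4) (Fin 4) ℝ) (hgs : g.IsSymm)
    (hglor : IsLorentzian g) (A : Fin 4 → ℝ) (hA : 0 < coQuadForm g A)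
    (q : ℝ) (hq₁ : -1 < q) (hq₂ : q < 1) (hq₀ : q ≠ 0) (L : (Fin 4 → ℝ) → ℝ)
    (hLdef : ∀ y : Fin 4 → ℝ, 0 < quadForm g y → 0 < linForm A y →
      L y = (quadForm g y) ^ (1 - q) * (linForm A y) ^ (2 * q)) :
    ∀ y : Fin 4 → ℝ, 0 < quadForm g y → 0 < linForm A y →
      (Lmetric L y).det < 0 :=
  bogoslovsky_q_between_det_neg_general g hgs hglor A hA q hq₁ hq₂ L hLdef
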